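/- arXiv:math/0507034 — 3 statements merged into one kernel-verified Lean document; each statement's English description precedes it below -/
import Mathlib

section
/- For all β > 0 and γ > 0, the integral ∫₀^∞ t^{-3/2} exp(-(βt + γ/t)/2) dt equals √(2π/γ) · exp(-√(βγ)). -/
/-!
With `t = γ / s ^ 2` the integral becomes `(2 / √γ) ∫₀^∞ exp (-(s ^ 2 + c ^ 2 / s ^ 2) / 2) ds`
where `c = √(βγ)`. Completing the square, `s ^ 2 + c ^ 2 / s ^ 2 = (s - c / s) ^ 2 + 2c`, and the
Cauchy–Schlömilch substitution `u = s - c / s` maps `(0, ∞)` onto `ℝ` with Jacobian `1 + c / s ^ 2`;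
the inversion `s ↦ c / s` shows that the `c / s ^ 2` part contributes as much as the `1` part, so
`∫₀^∞ F (s - c / s) ds = ½ ∫ F` for even `F`. The Gaussian integral then gives
`√(π / 2) e^{-c}`.
-/

open MeasureTheory Real Set

variable {c : ℝ}

section Substitution

variable {E : Type*} [NormedAddCommGroup E] [NormedSpace ℝ E]

theorem integral_comp_const_div_pow_Ioi (g : ℝ → E) {a : ℝ} (ha : 0 < a) {n : ℕ} (hn : n ≠ 0) :
    ∫ x in Ioi 0, (n * a / x ^ (n + 1)) • g (a / x ^ n) = ∫ y in Ioi 0, g y := by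
  have hsubst := integral_comp_rpow_Ioi (fun y ↦ a • g (a * y)) (p := -n) (by simpa using hn)
  rw [integral_smul, integral_comp_mul_left_Ioi' g 0 ha, mul_zero] at hsubst
  rw [← hsubst]
  refine setIntegral_congr_fun measurableSet_Ioi fun x hx ↦ ?_
  have hx : 0 < x := hx
  rw [smul_smul, abs_neg, Nat.abs_cast, show -(n : ℝ) - 1 = -((n + 1 : ℕ) : ℝ) by push_cast; ring,
    rpow_neg hx.le, rpow_neg hx.le, rpow_natCast, rpow_natCast]
  congr 1
  ring

theorem integral_Ioi_smul_comp_const_div (g : ℝ → E) (hc : 0 < c) :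
    ∫ s in Ioi 0, (c / s ^ 2) • g (c / s) = ∫ t in Ioi 0, g t := by
  simpa using integral_comp_const_div_pow_Ioi g hc one_ne_zero

theorem strictMonoOn_sub_const_div (hc : 0 ≤ c) : StrictMonoOn (fun s : ℝ ↦ s - c / s) (Ioi 0) :=
  fun _ hx _ _ hxy ↦ by linarith [div_le_div_of_nonneg_left hc hx hxy.le]

theorem image_sub_const_div_Ioi (hc : 0 < c) : (fun s : ℝ ↦ s - c / s) '' Ioi 0 = univ := by
  refine eq_univ_of_forall fun u ↦ ?_
  -- the positive root of `s ^ 2 - u * s - c = 0`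
  set r := √(u ^ 2 + 4 * c)
  have hr : r ^ 2 = u ^ 2 + 4 * c := sq_sqrt (by positivity)
  have hur : |u| < r := by rw [← sqrt_sq_eq_abs]; exact sqrt_lt_sqrt (sq_nonneg u) (by linarith)
  have hpos : 0 < u + r := by linarith [neg_abs_le u]
  refine ⟨(u + r) / 2, half_pos hpos, ?_⟩
  field_simp
  linear_combination hr

theorem hasDerivAt_sub_const_div {s : ℝ} (hs : s ≠ 0) :
    HasDerivAt (fun s : ℝ ↦ s - c / s) (1 + c / s ^ 2) s := by
  simpa [div_eq_mul_inv, sub_eq_add_neg] using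
    (hasDerivAt_id' s).fun_sub ((hasDerivAt_inv hs).const_mul c)

theorem integral_Ioi_comp_sub_const_div {F : ℝ → E} (hF : Integrable F)
    (hF_even : ∀ u, F (-u) = F u) (hc : 0 < c) :
    ∫ s in Ioi 0, F (s - c / s) = (2 : ℝ)⁻¹ • ∫ u, F u := by
  set G : ℝ → E := fun s ↦ F (s - c / s)
  have hderiv : ∀ s ∈ Ioi (0 : ℝ),
      HasDerivWithinAt (fun s ↦ s - c / s) (1 + c / s ^ 2) (Ioi 0) s :=
    fun s hs ↦ (hasDerivAt_sub_const_div (ne_of_gt hs)).hasDerivWithinAt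
  have hinj := (strictMonoOn_sub_const_div hc.le).injOn
  have hjac_pos : ∀ s : ℝ, 0 < 1 + c / s ^ 2 := fun s ↦ by positivity
  have hjac : IntegrableOn (fun s ↦ (1 + c / s ^ 2) • G s) (Ioi 0) := by
    have := (integrableOn_image_iff_integrableOn_abs_deriv_smul measurableSet_Ioi hderiv hinj F).1
      (by rw [image_sub_const_div_Ioi hc]; exact hF.integrableOn)
    simpa only [abs_of_pos (hjac_pos _)] using this
  have hG : IntegrableOn G (Ioi 0) := by
    have hbdd := hjac.bdd_smul 1 (φ := fun s ↦ (1 + c / s ^ 2)⁻¹)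
      (Measurable.aestronglyMeasurable (by fun_prop)) <| ae_of_all _ fun s ↦ by
        rw [norm_inv, Real.norm_of_nonneg (hjac_pos s).le]
        exact inv_le_one_of_one_le₀ (le_add_of_nonneg_right (by positivity))
    have hcancel : (fun s ↦ (1 + c / s ^ 2)⁻¹) • (fun s ↦ (1 + c / s ^ 2) • G s) = G := by
      funext s
      simp [smul_smul, inv_mul_cancel₀ (hjac_pos s).ne']
    rwa [hcancel] at hbdd
  have hG' : IntegrableOn (fun s ↦ (c / s ^ 2) • G s) (Ioi 0) := by
    refine (hjac.sub hG).congr_fun (fun s _ ↦ ?_) measurableSet_Ioi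
    simp only [Pi.sub_apply, add_smul, one_smul, add_sub_cancel_left]
  have hsymm : ∫ s in Ioi 0, (c / s ^ 2) • G s = ∫ s in Ioi 0, G s := by
    rw [← integral_Ioi_smul_comp_const_div G hc]
    refine setIntegral_congr_fun measurableSet_Ioi fun s hs ↦ ?_
    have hs : s ≠ 0 := ne_of_gt hs
    -- `s ↦ c / s` reverses the sign of `s - c / s`
    simp only [G, ← hF_even (s - c / s)]
    congr 3
    field_simp
    ring
  have hsplit : ∫ u, F u = ∫ s in Ioi 0, G s + (c / s ^ 2) • G s := by
    rw [← setIntegral_univ, ← image_sub_const_div_Ioi hc,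
      integral_image_eq_integral_abs_deriv_smul measurableSet_Ioi hderiv hinj]
    refine setIntegral_congr_fun measurableSet_Ioi fun s _ ↦ ?_
    simp only [abs_of_pos (hjac_pos s), add_smul, one_smul, G]
  rw [hsplit, integral_add hG hG', hsymm, ← two_smul ℝ, smul_smul, inv_mul_cancel₀ two_ne_zero,
    one_smul]

end Substitution

theorem div_sq_rpow_neg_three_div_two {a s : ℝ} (ha : 0 ≤ a) (hs : 0 < s) :
    (a / s ^ 2) ^ (-(3 : ℝ) / 2) = (s / √a) ^ 3 := by
  rw [show -(3 : ℝ) / 2 = 1 / 2 * -(3 : ℕ) by norm_num, rpow_mul (by positivity),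
    ← sqrt_eq_rpow, sqrt_div ha, sqrt_sq hs.le, rpow_neg (by positivity), rpow_natCast, ← inv_pow,
    inv_div]

theorem integral_exp_neg_sq_add_sq_div_sq_Ioi (hc : 0 < c) :
    ∫ s in Ioi 0, exp (-((s ^ 2 + c ^ 2 / s ^ 2) / 2)) = √(π / 2) * exp (-c) := by
  have hsquare : ∀ s ∈ Ioi (0 : ℝ),
      exp (-((s ^ 2 + c ^ 2 / s ^ 2) / 2)) = exp (-c) * exp (-(1 / 2) * (s - c / s) ^ 2) := by
    intro s hs
    have hs : s ≠ 0 := ne_of_gt hs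
    rw [← exp_add]
    congr 1
    field_simp
    ring
  rw [setIntegral_congr_fun measurableSet_Ioi hsquare, integral_const_mul,
    integral_Ioi_comp_sub_const_div (F := fun u ↦ exp (-(1 / 2) * u ^ 2))
      (integrable_exp_neg_mul_sq one_half_pos) (fun u ↦ by simp) hc,
    integral_gaussian, smul_eq_mul, show π / (1 / 2) = 2 ^ 2 * (π / 2) by ring,
    sqrt_mul (by positivity), sqrt_sq zero_le_two]
  ring

/-- Classical Laplace-type integral identity related to `K_{1/2}`:
for `β, γ > 0`, `∫₀^∞ t^{-3/2} exp(-(βt + γ/t)/2) dt = √(2π/γ) e^{-√(βγ)}`. -/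
theorem integral_rpow_neg_three_half_exp (β γ : ℝ) (hβ : 0 < β) (hγ : 0 < γ) :
    ∫ t in Ioi (0 : ℝ), t ^ (-(3 : ℝ) / 2) * exp (-((β * t + γ / t) / 2))
      = sqrt (2 * π / γ) * exp (-sqrt (β * γ)) := by
  set c := √(β * γ)
  have hc : 0 < c := by positivity
  have hsubst : ∀ s ∈ Ioi (0 : ℝ), ((2 : ℕ) * γ / s ^ (2 + 1)) •
      ((γ / s ^ 2) ^ (-(3 : ℝ) / 2) * exp (-((β * (γ / s ^ 2) + γ / (γ / s ^ 2)) / 2)))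
        = 2 / √γ * exp (-((s ^ 2 + c ^ 2 / s ^ 2) / 2)) := by
    intro s hs
    have hs : 0 < s := hs
    have hexp : β * (γ / s ^ 2) + γ / (γ / s ^ 2) = s ^ 2 + c ^ 2 / s ^ 2 := by
      rw [sq_sqrt (by positivity)]
      field_simp
      ring
    have hγ' : √γ ^ 2 = γ := sq_sqrt hγ.le
    rw [div_sq_rpow_neg_three_div_two hγ.le hs, hexp, smul_eq_mul, ← mul_assoc]
    congr 1
    field_simp
    rw [hγ']
    ring
  rw [← integral_comp_const_div_pow_Ioi _ hγ two_ne_zero,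
    setIntegral_congr_fun measurableSet_Ioi hsubst, integral_const_mul,
    integral_exp_neg_sq_add_sq_div_sq_Ioi hc, show 2 * π / γ = 2 ^ 2 * (π / 2) / γ by ring,
    sqrt_div' _ hγ.le, sqrt_mul (by positivity), sqrt_sq zero_le_two]
  ring
end

section
/- Let ν be a finite measure on ℝ with λ = ν(ℝ), let c₀ ∈ ℝ, θ ≥ 0 and α_θ = √(c₀² + 2(λ+θ)). Define the operator Λ_θ on bounded measurable functions h : ℝ₊ → ℝ by Λ_θ h(x) = (1/α_θ) ∫_ℝ ν(dy) ∫_{-∞}^{min(x-y, x)} e^{-c₀ a}(e^{-α_θ |a|} - e^{-(2x-a)α_θ}) h(x - a - y) da. Then Λ_θ is a non-negative linear operator on L^∞(ℝ₊) and its operator norm equals λ/(λ + θ). -/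
/-!
For `a ≤ x` and `x ≥ 0` the kernel `e^{-c₀a}(e^{-α|a|} - e^{-(2x-a)α})` of `Λ_θ` lies between `0`
and `e^{-c₀a - α|a|}`, whose integral over `ℝ` is `2α/(α² - c₀²)`, that is `α/(λ+θ)` for
`α = α_θ`. Integrating against `ν` and dividing by `α` gives `|Λ_θ h| ≤ λ/(λ+θ) ‖h‖_∞`.
For `h = 1` the bound is approached as `x → ∞`: the domain `a < min (x - y) x` exhausts `ℝ` and
the term `e^{-(2x-a)α}` vanishes, so dominated convergence, first in `a` and then in `y`,
gives `Λ_θ 1 (x) → λ/(λ+θ)`.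
-/

open MeasureTheory Real Set Filter Topology

section ExpAbs

variable {c α : ℝ}

lemma integrableOn_exp_mul_exp_neg_abs_Iic (h : c < α) :
    IntegrableOn (fun a => exp (-c * a) * exp (-(α * |a|))) (Iic 0) :=
  (integrableOn_exp_mul_Iic (sub_pos.2 h) 0).congr_fun (fun a ha => by
    rw [abs_of_nonpos ha, ← exp_add]; ring_nf) measurableSet_Iic

lemma integrableOn_exp_mul_exp_neg_abs_Ioi (h : -c < α) :
    IntegrableOn (fun a => exp (-c * a) * exp (-(α * |a|))) (Ioi 0) :=
  (integrableOn_exp_mul_Ioi (by linarith : -(α + c) < 0) 0).congr_fun (fun a ha => by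
    rw [abs_of_pos ha, ← exp_add]; ring_nf) measurableSet_Ioi

theorem integrable_exp_mul_exp_neg_abs (h : |c| < α) :
    Integrable fun a => exp (-c * a) * exp (-(α * |a|)) := by
  rw [← integrableOn_univ, ← Iic_union_Ioi (a := 0)]
  exact (integrableOn_exp_mul_exp_neg_abs_Iic (abs_lt.1 h).2).union
    (integrableOn_exp_mul_exp_neg_abs_Ioi (by linarith [(abs_lt.1 h).1]))

theorem integral_exp_mul_exp_neg_abs (h : |c| < α) :
    ∫ a, exp (-c * a) * exp (-(α * |a|)) = 2 * α / (α ^ 2 - c ^ 2) := by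
  obtain ⟨hlt, hgt⟩ := abs_lt.1 h
  have hneg : ∫ a in Iic 0, exp (-c * a) * exp (-(α * |a|)) = 1 / (α - c) := by
    rw [setIntegral_congr_fun measurableSet_Iic (g := fun a => exp ((α - c) * a)) (fun a ha => by
      simp only; rw [abs_of_nonpos ha, ← exp_add]; ring_nf),
      integral_exp_mul_Iic (sub_pos.2 hgt), mul_zero, exp_zero]
  have hpos : ∫ a in Ioi 0, exp (-c * a) * exp (-(α * |a|)) = 1 / (α + c) := by
    rw [setIntegral_congr_fun measurableSet_Ioi (g := fun a => exp (-(α + c) * a)) (fun a ha => by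
      simp only; rw [abs_of_pos ha, ← exp_add]; ring_nf),
      integral_exp_mul_Ioi (by linarith), mul_zero, exp_zero, neg_div_neg_eq]
  rw [← setIntegral_univ, ← Iic_union_Ioi (a := 0),
    setIntegral_union (Iic_disjoint_Ioi le_rfl) measurableSet_Ioi
      (integrableOn_exp_mul_exp_neg_abs_Iic hgt)
      (integrableOn_exp_mul_exp_neg_abs_Ioi (by linarith)),
    hneg, hpos]
  have : α - c ≠ 0 := by linarith
  have : α + c ≠ 0 := by linarith
  rw [show α ^ 2 - c ^ 2 = (α - c) * (α + c) by ring]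
  field_simp
  ring

end ExpAbs

lemma antitone_setIntegral_Iio_min {f : ℝ → ℝ} {x : ℝ} (hf : IntegrableOn f (Iio x))
    (hf0 : ∀ a < x, 0 ≤ f a) : Antitone fun y => ∫ a in Iio (min (x - y) x), f a := by
  intro y₁ y₂ hy
  refine setIntegral_mono_set (hf.mono_set (Iio_subset_Iio (min_le_right _ _))) ?_
    (Iio_subset_Iio (min_le_min (by linarith) le_rfl)).eventuallyLE
  filter_upwards [ae_restrict_mem measurableSet_Iio] with a ha
  exact hf0 a (ha.trans_le (min_le_right _ _))

lemma ciSup_Ici_eq_of_tendsto {f : ℝ → ℝ} {b M : ℝ} (hle : ∀ x, b ≤ x → f x ≤ M)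
    (hlim : Tendsto f atTop (𝓝 M)) : ⨆ x : Ici b, f x = M := by
  have : Nonempty (Ici b) := ⟨⟨b, mem_Ici.2 le_rfl⟩⟩
  refine le_antisymm (ciSup_le fun x => hle x x.2) (le_of_tendsto hlim ?_)
  filter_upwards [eventually_ge_atTop b] with x hx
  exact le_ciSup (f := fun x : Ici b => f x) ⟨M, by rintro _ ⟨x, rfl⟩; exact hle x x.2⟩ ⟨x, hx⟩

noncomputable def renewalKernel (c₀ α x a : ℝ) : ℝ :=
  exp (-c₀ * a) * (exp (-(α * |a|)) - exp (-((2 * x - a) * α)))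

/-- `Λ_θ h (x) = renewalOperator ν c₀ α_θ h x`. -/
noncomputable def renewalOperator (ν : Measure ℝ) (c₀ α : ℝ) (h : ℝ → ℝ) (x : ℝ) : ℝ :=
  (1 / α) * ∫ y, (∫ a in Iio (min (x - y) x), renewalKernel c₀ α x a * h (x - a - y)) ∂ν

section RenewalKernel

variable {c₀ α x a : ℝ}

@[fun_prop]
lemma measurable_renewalKernel : Measurable (renewalKernel c₀ α x) := by
  unfold renewalKernel; fun_prop

lemma renewalKernel_nonneg (hα : 0 ≤ α) (hx : 0 ≤ x) (ha : a ≤ x) :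
    0 ≤ renewalKernel c₀ α x a := by
  have habs : α * |a| ≤ (2 * x - a) * α := by
    rw [mul_comm]; exact mul_le_mul_of_nonneg_right (abs_le.2 ⟨by linarith, by linarith⟩) hα
  exact mul_nonneg (exp_pos _).le (sub_nonneg.2 (exp_le_exp.2 (neg_le_neg habs)))

lemma renewalKernel_le : renewalKernel c₀ α x a ≤ exp (-c₀ * a) * exp (-(α * |a|)) :=
  mul_le_mul_of_nonneg_left (sub_le_self _ (exp_pos _).le) (exp_pos _).le

lemma tendsto_renewalKernel_atTop (hα : 0 < α) (c₀ a : ℝ) :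
    Tendsto (fun x => renewalKernel c₀ α x a) atTop
      (𝓝 (exp (-c₀ * a) * exp (-(α * |a|)))) := by
  have hlin : Tendsto (fun x : ℝ => (2 * x - a) * α) atTop atTop :=
    ((tendsto_id.const_mul_atTop two_pos).atTop_add tendsto_const_nhds).atTop_mul_const hα
  simpa only [renewalKernel, Function.comp_def, sub_zero] using
    ((tendsto_exp_neg_atTop_nhds_zero.comp hlin).const_sub _).const_mul (exp (-c₀ * a))

end RenewalKernel

section RenewalOperator

variable {ν : Measure ℝ} {c₀ α x : ℝ}

lemma abs_setIntegral_renewalKernel_mul_le (hc : |c₀| < α) (hx : 0 ≤ x) {s : Set ℝ}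
    (hs : MeasurableSet s) (hsx : s ⊆ Iic x) {g : ℝ → ℝ} {C : ℝ} (hg : ∀ a, |g a| ≤ C) :
    |∫ a in s, renewalKernel c₀ α x a * g a| ≤ C * (2 * α / (α ^ 2 - c₀ ^ 2)) := by
  have hα : 0 ≤ α := (abs_nonneg c₀).trans hc.le
  have hC : 0 ≤ C := (abs_nonneg _).trans (hg 0)
  have hφC := (integrable_exp_mul_exp_neg_abs hc).mul_const C
  calc |∫ a in s, renewalKernel c₀ α x a * g a|
      ≤ ∫ a in s, exp (-c₀ * a) * exp (-(α * |a|)) * C := by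
        rw [← Real.norm_eq_abs]
        refine norm_integral_le_of_norm_le hφC.integrableOn (ae_restrict_of_forall_mem hs ?_)
        intro a ha
        rw [Real.norm_eq_abs, abs_mul, abs_of_nonneg (renewalKernel_nonneg hα hx (hsx ha))]
        exact mul_le_mul renewalKernel_le (hg a) (abs_nonneg _)
          ((renewalKernel_nonneg hα hx (hsx ha)).trans renewalKernel_le)
    _ ≤ ∫ a, exp (-c₀ * a) * exp (-(α * |a|)) * C :=
        setIntegral_le_integral hφC (Eventually.of_forall fun a => by positivity)
    _ = C * (2 * α / (α ^ 2 - c₀ ^ 2)) := by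
        rw [integral_mul_const, integral_exp_mul_exp_neg_abs hc, mul_comm]

lemma renewalOperator_nonneg (hα : 0 ≤ α) {h : ℝ → ℝ} (hh : ∀ z, 0 ≤ h z) (hx : 0 ≤ x) :
    0 ≤ renewalOperator ν c₀ α h x := by
  refine mul_nonneg (by positivity) (integral_nonneg fun y => ?_)
  refine setIntegral_nonneg measurableSet_Iio fun a ha => ?_
  exact mul_nonneg (renewalKernel_nonneg hα hx (ha.le.trans (min_le_right _ _))) (hh _)

lemma abs_renewalOperator_le [IsFiniteMeasure ν] (hc : |c₀| < α) {h : ℝ → ℝ} {C : ℝ}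
    (hh : ∀ z, |h z| ≤ C) (hx : 0 ≤ x) :
    |renewalOperator ν c₀ α h x| ≤ ν.real univ * (2 / (α ^ 2 - c₀ ^ 2)) * C := by
  have hα : 0 < α := (abs_nonneg c₀).trans_lt hc
  rw [renewalOperator, abs_mul, abs_of_pos (one_div_pos.2 hα), ← Real.norm_eq_abs]
  calc _ ≤ 1 / α * (C * (2 * α / (α ^ 2 - c₀ ^ 2)) * ν.real univ) :=
        mul_le_mul_of_nonneg_left (norm_integral_le_of_norm_le_const (Eventually.of_forall fun y =>
          abs_setIntegral_renewalKernel_mul_le hc hx measurableSet_Iio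
            (Iio_subset_Iic_self.trans (Iic_subset_Iic.2 (min_le_right (x - y) x)))
            (fun a => hh (x - a - y)))) (one_div_pos.2 hα).le
    _ = ν.real univ * (2 / (α ^ 2 - c₀ ^ 2)) * C := by
        field_simp

lemma tendsto_setIntegral_renewalKernel_atTop (hc : |c₀| < α) (y : ℝ) :
    Tendsto (fun x => ∫ a in Iio (min (x - y) x), renewalKernel c₀ α x a) atTop
      (𝓝 (2 * α / (α ^ 2 - c₀ ^ 2))) := by
  have hα : 0 < α := (abs_nonneg c₀).trans_lt hc
  simp_rw [← integral_indicator measurableSet_Iio, ← integral_exp_mul_exp_neg_abs hc]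
  refine tendsto_integral_filter_of_dominated_convergence _
    (Eventually.of_forall fun x =>
      (measurable_renewalKernel.indicator measurableSet_Iio).aestronglyMeasurable) ?_
    (integrable_exp_mul_exp_neg_abs hc) (Eventually.of_forall fun a => ?_)
  · filter_upwards [eventually_ge_atTop 0] with x hx
    refine Eventually.of_forall fun a => ?_
    rw [norm_indicator_eq_indicator_norm]
    refine indicator_apply_le' (fun ha => ?_) (fun _ => ?_)
    · rw [Real.norm_eq_abs,
        abs_of_nonneg (renewalKernel_nonneg hα.le hx (ha.out.le.trans (min_le_right _ _)))]
      exact renewalKernel_le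
    · positivity
  · refine (tendsto_renewalKernel_atTop hα c₀ a).congr' ?_
    filter_upwards [eventually_gt_atTop (max (a + y) a)] with x hx
    rw [max_lt_iff] at hx
    exact (indicator_of_mem (show a ∈ Iio (min (x - y) x) from lt_min (by linarith) hx.2) _).symm

lemma tendsto_renewalOperator_one_atTop [IsFiniteMeasure ν] (hc : |c₀| < α) :
    Tendsto (fun x => (1 / α) * ∫ y, (∫ a in Iio (min (x - y) x), renewalKernel c₀ α x a) ∂ν)
      atTop (𝓝 (ν.real univ * (2 / (α ^ 2 - c₀ ^ 2)))) := by
  have hα : 0 < α := (abs_nonneg c₀).trans_lt hc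
  have hφ := integrable_exp_mul_exp_neg_abs hc
  have hinner : ∀ x, 0 ≤ x → ∀ y,
      ‖∫ a in Iio (min (x - y) x), renewalKernel c₀ α x a‖ ≤ 2 * α / (α ^ 2 - c₀ ^ 2) := by
    intro x hx y
    simpa only [Real.norm_eq_abs, mul_one, one_mul] using
      abs_setIntegral_renewalKernel_mul_le (g := fun _ => 1) hc hx measurableSet_Iio
      (Iio_subset_Iic_self.trans (Iic_subset_Iic.2 (min_le_right (x - y) x)))
      (fun _ => abs_one.le)
  have hmeas : ∀ x, 0 ≤ x →
      Measurable fun y => ∫ a in Iio (min (x - y) x), renewalKernel c₀ α x a := by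
    intro x hx
    refine (antitone_setIntegral_Iio_min ?_
      fun a ha => renewalKernel_nonneg hα.le hx ha.le).measurable
    refine hφ.integrableOn.mono' measurable_renewalKernel.aestronglyMeasurable ?_
    filter_upwards [ae_restrict_mem measurableSet_Iio] with a ha
    rw [Real.norm_eq_abs, abs_of_nonneg (renewalKernel_nonneg hα.le hx (le_of_lt ha))]
    exact renewalKernel_le
  have hlim := tendsto_integral_filter_of_dominated_convergence (μ := ν) _
    ((eventually_ge_atTop 0).mono fun x hx => (hmeas x hx).aestronglyMeasurable)
    ((eventually_ge_atTop 0).mono fun x hx => Eventually.of_forall (hinner x hx))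
    (integrable_const _)
    (Eventually.of_forall (tendsto_setIntegral_renewalKernel_atTop hc))
  rw [integral_const, smul_eq_mul] at hlim
  convert hlim.const_mul (1 / α) using 2
  field_simp

end RenewalOperator

theorem renewal_operator_norm_general (ν : Measure ℝ) [IsFiniteMeasure ν]
    (c₀ θ lam : ℝ) (hlam : lam = (ν univ).toReal) (hpos : 0 < lam + θ) :
    (∀ h : ℝ → ℝ, Measurable h → (∀ z, 0 ≤ h z) → ∀ x : ℝ, 0 ≤ x →
      0 ≤ (1 / Real.sqrt (c₀ ^ 2 + 2 * (lam + θ))) *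
        ∫ y, (∫ a in Iio (min (x - y) x),
          exp (-c₀ * a) * (exp (-(Real.sqrt (c₀ ^ 2 + 2 * (lam + θ)) * |a|)) -
            exp (-((2 * x - a) * Real.sqrt (c₀ ^ 2 + 2 * (lam + θ))))) * h (x - a - y)) ∂ν) ∧
    (∀ (h : ℝ → ℝ), Measurable h → ∀ C : ℝ, (∀ z, |h z| ≤ C) → ∀ x : ℝ, 0 ≤ x →
      |(1 / Real.sqrt (c₀ ^ 2 + 2 * (lam + θ))) *
        ∫ y, (∫ a in Iio (min (x - y) x),
          exp (-c₀ * a) * (exp (-(Real.sqrt (c₀ ^ 2 + 2 * (lam + θ)) * |a|)) -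
            exp (-((2 * x - a) * Real.sqrt (c₀ ^ 2 + 2 * (lam + θ))))) * h (x - a - y)) ∂ν|
        ≤ (lam / (lam + θ)) * C) ∧
    (⨆ x : Ici (0 : ℝ),
      (1 / Real.sqrt (c₀ ^ 2 + 2 * (lam + θ))) *
        ∫ y, (∫ a in Iio (min ((x : ℝ) - y) (x : ℝ)),
          exp (-c₀ * a) * (exp (-(Real.sqrt (c₀ ^ 2 + 2 * (lam + θ)) * |a|)) -
            exp (-((2 * (x : ℝ) - a) * Real.sqrt (c₀ ^ 2 + 2 * (lam + θ)))))) ∂ν)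
      = lam / (lam + θ) := by
  set α := Real.sqrt (c₀ ^ 2 + 2 * (lam + θ))
  have hc : |c₀| < α := lt_sqrt_of_sq_lt (by rw [sq_abs]; linarith)
  have hnorm : ν.real univ * (2 / (α ^ 2 - c₀ ^ 2)) = lam / (lam + θ) := by
    rw [sq_sqrt (by positivity), measureReal_def, ← hlam]
    field_simp
    ring
  have hbound (h : ℝ → ℝ) {C : ℝ} (hh : ∀ z, |h z| ≤ C) (x : ℝ) (hx : 0 ≤ x) :
      |renewalOperator ν c₀ α h x| ≤ lam / (lam + θ) * C :=
    hnorm ▸ abs_renewalOperator_le hc hh hx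
  refine ⟨fun h _ hh x hx => renewalOperator_nonneg (abs_nonneg c₀ |>.trans hc.le) hh hx,
    fun h _ C hh x hx => hbound h hh x hx, ?_⟩
  refine ciSup_Ici_eq_of_tendsto (fun x hx => ?_) (hnorm ▸ tendsto_renewalOperator_one_atTop hc)
  simpa only [renewalOperator, mul_one] using
    (le_abs_self _).trans (hbound (fun _ => 1) (fun _ => abs_one.le) x hx)

/-- The renewal operator `Λ_θ` associated with a finite jump measure `ν` (mass `λ`),
drift `-c₀` and killing rate `θ ≥ 0` is a non-negative linear operator on `L^∞(ℝ₊)`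
with operator norm `λ/(λ+θ)`: it maps non-negative functions to non-negative functions,
satisfies `|Λ_θ h(x)| ≤ (λ/(λ+θ)) ‖h‖_∞`, and the bound is attained (as a supremum)
at the constant function `1`. -/
theorem renewal_operator_norm (ν : Measure ℝ) [IsFiniteMeasure ν]
    (c₀ θ lam : ℝ) (hθ : 0 ≤ θ) (hlam : lam = (ν univ).toReal) (hpos : 0 < lam + θ) :
    (∀ h : ℝ → ℝ, Measurable h → (∀ z, 0 ≤ h z) → ∀ x : ℝ, 0 ≤ x →
      0 ≤ (1 / Real.sqrt (c₀ ^ 2 + 2 * (lam + θ))) *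
        ∫ y, (∫ a in Iio (min (x - y) x),
          exp (-c₀ * a) * (exp (-(Real.sqrt (c₀ ^ 2 + 2 * (lam + θ)) * |a|)) -
            exp (-((2 * x - a) * Real.sqrt (c₀ ^ 2 + 2 * (lam + θ))))) * h (x - a - y)) ∂ν) ∧
    (∀ (h : ℝ → ℝ), Measurable h → ∀ C : ℝ, (∀ z, |h z| ≤ C) → ∀ x : ℝ, 0 ≤ x →
      |(1 / Real.sqrt (c₀ ^ 2 + 2 * (lam + θ))) *
        ∫ y, (∫ a in Iio (min (x - y) x),
          exp (-c₀ * a) * (exp (-(Real.sqrt (c₀ ^ 2 + 2 * (lam + θ)) * |a|)) -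
            exp (-((2 * x - a) * Real.sqrt (c₀ ^ 2 + 2 * (lam + θ))))) * h (x - a - y)) ∂ν|
        ≤ (lam / (lam + θ)) * C) ∧
    (⨆ x : Ici (0 : ℝ),
      (1 / Real.sqrt (c₀ ^ 2 + 2 * (lam + θ))) *
        ∫ y, (∫ a in Iio (min ((x : ℝ) - y) (x : ℝ)),
          exp (-c₀ * a) * (exp (-(Real.sqrt (c₀ ^ 2 + 2 * (lam + θ)) * |a|)) -
            exp (-((2 * (x : ℝ) - a) * Real.sqrt (c₀ ^ 2 + 2 * (lam + θ)))))) ∂ν)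
      = lam / (lam + θ) :=
  renewal_operator_norm_general ν c₀ θ lam hlam hpos
end

section
/- Under the hypotheses of the previous statement, if moreover θ > 0, or θ = 0 and E(X₁) < 0, then there exists γ ∈ (0, r_ν) with φ(-γ) < θ, and for any such γ one has 0 < c_{θ,γ} < 1, so Λ_θ is a strict contraction on 𝓑_γ. -/
open MeasureTheory Real Set Filter Topology ProbabilityTheory

/-!
Write `φ(-γ) = γ G(γ)` with
`G(γ) = γ/2 - c - ∫ y 1_{|y|<1} dν + ∫ (e^{γy} - 1)/γ dν`.
Convexity of `exp` bounds `|e^{γy} - 1|/γ` by `|y| + e^{sy}/s` for `0 < γ ≤ s`, so by dominated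
convergence `G(γ) → -c₀ + ∫ y dν = E(X₁)` as `γ ↓ 0`. Hence `φ(-γ) → 0`, and `φ(-γ) < 0` for small
`γ` when `E(X₁) < 0`. For any `γ` with `φ(-γ) < θ` the denominator of `c_{θ,γ}` exceeds its
numerator `ν̂(-γ) > 0`.
-/

lemma abs_exp_mul_sub_one_le {s γ : ℝ} (hs : 0 < s) (hγ : 0 < γ) (hγs : γ ≤ s) (y : ℝ) :
    |exp (γ * y) - 1| ≤ γ * (|y| + exp (s * y) / s) := by
  rcases le_or_gt 0 y with hy | hy
  · have hconv : exp (γ * y) ≤ γ / s * exp (s * y) + (1 - γ / s) := by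
      have h := convexOn_exp.2 (mem_univ (s * y)) (mem_univ 0) (div_nonneg hγ.le hs.le)
        (sub_nonneg.2 ((div_le_one hs).2 hγs)) (by ring)
      simp only [smul_eq_mul, mul_zero, add_zero, exp_zero, mul_one] at h
      rwa [← mul_assoc, div_mul_cancel₀ γ hs.ne'] at h
    rw [abs_of_nonneg (sub_nonneg.2 (one_le_exp (by positivity)))]
    calc exp (γ * y) - 1 ≤ γ / s * exp (s * y) := by linarith [div_pos hγ hs]
      _ = γ * (exp (s * y) / s) := by ring
      _ ≤ γ * (|y| + exp (s * y) / s) := by gcongr; exact le_add_of_nonneg_left (abs_nonneg y)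
  · rw [abs_of_nonpos (sub_nonpos.2 (exp_le_one_iff.2 (mul_neg_of_pos_of_neg hγ hy).le)),
      abs_of_neg hy]
    nlinarith [add_one_le_exp (γ * y), div_pos (exp_pos (s * y)) hs]

/-- `φ(-γ)`. -/
noncomputable def laplaceExponentNeg (ν : Measure ℝ) (c γ : ℝ) : ℝ :=
  (-γ) ^ 2 / 2 + c * (-γ) +
    ∫ y, (exp (γ * y) - 1 + (-γ) * y * (if |y| < 1 then 1 else 0)) ∂ν

section

variable {ν : Measure ℝ} {s : ℝ}

lemma integrable_truncated_id [IsFiniteMeasure ν] :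
    Integrable (fun y : ℝ => if |y| < 1 then y else 0) ν := by
  refine (integrable_const (1 : ℝ)).mono ?_ (ae_of_all _ fun y => ?_)
  · exact (Measurable.ite (measurableSet_lt (by fun_prop) measurable_const) measurable_id
      measurable_const).aestronglyMeasurable
  · split_ifs with h
    · simp [h.le]
    · simp

lemma tendsto_integral_exp_mul_sub_one_div (hs : 0 < s)
    (hexp : Integrable (fun y => exp (s * y)) ν) (hid : Integrable (fun y => y) ν) :
    Tendsto (fun γ => ∫ y, (exp (γ * y) - 1) / γ ∂ν) (𝓝[>] 0) (𝓝 (∫ y, y ∂ν)) := by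
  refine tendsto_integral_filter_of_dominated_convergence (fun y => |y| + exp (s * y) / s)
    (Eventually.of_forall fun γ => by fun_prop) ?_ (hid.abs.add (hexp.div_const s))
    (ae_of_all _ fun y => ?_)
  · filter_upwards [Ioc_mem_nhdsGT hs] with γ hγ
    refine ae_of_all _ fun y => ?_
    rw [norm_div, Real.norm_eq_abs, Real.norm_of_nonneg hγ.1.le, div_le_iff₀' hγ.1]
    exact abs_exp_mul_sub_one_le hs hγ.1 hγ.2 y
  · have hderiv : HasDerivAt (fun γ => exp (γ * y)) y 0 := by
      simpa using (hasDerivAt_mul_const (x := 0) y).exp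
    refine hderiv.tendsto_slope_zero_right.congr fun γ => ?_
    simp [div_eq_inv_mul]

lemma laplaceExponentNeg_eq_mul [IsFiniteMeasure ν] {c γ : ℝ}
    (hexp : Integrable (fun y => exp (s * y)) ν) (hγ : 0 < γ) (hγs : γ ≤ s) :
    laplaceExponentNeg ν c γ = γ * (γ / 2 - c - ∫ y, (if |y| < 1 then y else 0) ∂ν +
      ∫ y, (exp (γ * y) - 1) / γ ∂ν) := by
  have hint : Integrable (fun y => exp (γ * y) - 1) ν :=
    (integrable_exp_mul_of_nonneg_of_le hexp hγ.le hγs).sub (integrable_const 1)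
  have hsplit : (fun y => exp (γ * y) - 1 + (-γ) * y * (if |y| < 1 then 1 else 0)) =
      fun y => (exp (γ * y) - 1) + (-γ) * (if |y| < 1 then y else 0) := by
    funext y; split_ifs <;> ring
  rw [laplaceExponentNeg, hsplit, integral_add hint (integrable_truncated_id.const_mul _),
    integral_const_mul, integral_div]
  field_simp
  ring

lemma tendsto_laplaceExponentNeg_div [IsFiniteMeasure ν] {c : ℝ} (hs : 0 < s)
    (hexp : Integrable (fun y => exp (s * y)) ν) (hid : Integrable (fun y => y) ν) :
    Tendsto (fun γ => laplaceExponentNeg ν c γ / γ) (𝓝[>] 0)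
      (𝓝 (-(c + ∫ y, (if |y| < 1 then y else 0) ∂ν) + ∫ y, y ∂ν)) := by
  set I := ∫ y, (if |y| < 1 then y else 0) ∂ν
  have hlin : Tendsto (fun γ : ℝ => γ / 2 - c - I) (𝓝[>] 0) (𝓝 (0 / 2 - c - I)) :=
    ((continuous_id.div_const 2).sub continuous_const |>.sub continuous_const).continuousWithinAt
  have hlim := hlin.add (tendsto_integral_exp_mul_sub_one_div hs hexp hid)
  rw [show 0 / 2 - c - I + ∫ y, y ∂ν = -(c + I) + ∫ y, y ∂ν by ring] at hlim
  refine hlim.congr' ?_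
  filter_upwards [Ioc_mem_nhdsGT hs] with γ hγ
  rw [laplaceExponentNeg_eq_mul hexp hγ.1 hγ.2, mul_div_cancel_left₀ _ hγ.1.ne']

end

lemma eventually_lt_of_tendsto_div {f : ℝ → ℝ} {m θ : ℝ}
    (hf : Tendsto (fun γ => f γ / γ) (𝓝[>] 0) (𝓝 m)) (hθ : 0 < θ ∨ (θ = 0 ∧ m < 0)) :
    ∀ᶠ γ in 𝓝[>] 0, f γ < θ := by
  have hmul : ∀ᶠ γ in 𝓝[>] 0, γ * (f γ / γ) = f γ :=
    eventually_mem_nhdsWithin.mono fun γ hγ => mul_div_cancel₀ _ (ne_of_gt hγ)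
  rcases hθ with hθ | ⟨rfl, hm⟩
  · have hf0 : Tendsto f (𝓝[>] 0) (𝓝 0) := by
      simpa using ((tendsto_nhdsWithin_of_tendsto_nhds tendsto_id).mul hf).congr' hmul
    exact hf0.eventually_lt_const hθ
  · filter_upwards [hf.eventually_lt_const hm, hmul, eventually_mem_nhdsWithin] with γ hneg hγf hγ
    rw [← hγf]
    exact mul_neg_of_pos_of_neg hγ hneg

/-- `γ < r_ν` is encoded as `γ < s` for an `s` with `e^{sy}` `ν`-integrable. -/
theorem exists_contraction_constant (ν : Measure ℝ) [IsFiniteMeasure ν] (hν : ν ≠ 0)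
    (c c₀ θ s : ℝ)
    (hc₀ : c₀ = c + ∫ y, (if |y| < 1 then y else 0) ∂ν)
    (hs : 0 < s) (hrν : Integrable (fun y => exp (s * y)) ν)
    (hEXint : Integrable (fun y => y) ν)
    (hθ : 0 < θ ∨ (θ = 0 ∧ -c₀ + ∫ y, y ∂ν < 0)) :
    (∃ γ : ℝ, 0 < γ ∧ γ < s ∧
      (-γ) ^ 2 / 2 + c * (-γ) +
          (∫ y, (exp (γ * y) - 1 + (-γ) * y * (if |y| < 1 then 1 else 0)) ∂ν) < θ) ∧
    ∀ γ : ℝ, 0 < γ → γ < s →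
      (-γ) ^ 2 / 2 + c * (-γ) +
          (∫ y, (exp (γ * y) - 1 + (-γ) * y * (if |y| < 1 then 1 else 0)) ∂ν) < θ →
      0 < (∫ y, exp (γ * y) ∂ν) /
            ((∫ y, exp (γ * y) ∂ν) -
              ((-γ) ^ 2 / 2 + c * (-γ) +
                ∫ y, (exp (γ * y) - 1 + (-γ) * y * (if |y| < 1 then 1 else 0)) ∂ν) + θ) ∧
      (∫ y, exp (γ * y) ∂ν) /
            ((∫ y, exp (γ * y) ∂ν) -
              ((-γ) ^ 2 / 2 + c * (-γ) +
                ∫ y, (exp (γ * y) - 1 + (-γ) * y * (if |y| < 1 then 1 else 0)) ∂ν) + θ) < 1 := by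
  have hlim := tendsto_laplaceExponentNeg_div (c := c) hs hrν hEXint
  rw [← hc₀] at hlim
  refine ⟨?_, fun γ hγ hγs hφ => ?_⟩
  · obtain ⟨γ, hφ, hγ, hγs⟩ :=
      ((eventually_lt_of_tendsto_div hlim hθ).and (Ioo_mem_nhdsGT hs)).exists
    exact ⟨γ, hγ, hγs, hφ⟩
  · have hN : 0 < ∫ y, exp (γ * y) ∂ν :=
      mgf_pos' hν (integrable_exp_mul_of_nonneg_of_le hrν hγ.le hγs.le)
    exact ⟨div_pos hN (by linarith), (div_lt_one (by linarith)).2 (by linarith)⟩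
end
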